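/- Let S be a t-conorm continuous in the first coordinate, and X a set with at least two elements. Every fuzzy binary relation R on X has a unique weak decomposition with respect to S if and only if S is strictly increasing in the first coordinate, i.e., for all x < y in [0,1] and z < 1, S(x,z) < S(y,z). -/

import Mathlib

structure Tconorm where
  S : unitInterval → unitInterval → unitInterval
  comm : ∀ a b, S a b = S b a
  assoc : ∀ a b c, S a (S b c) = S (S a b) c
  mono : ∀ a b c d, a ≤ c → b ≤ d → S a b ≤ S c d
  S_zero : ∀ a, S a 0 = a
  S_one : ∀ a, S a 1 = 1

structure Tnorm where
  T : unitInterval → unitInterval → unitInterval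
  comm : ∀ a b, T a b = T b a
  assoc : ∀ a b c, T a (T b c) = T (T a b) c
  mono : ∀ a b c d, a ≤ c → b ≤ d → T a b ≤ T c d
  T_one : ∀ a, T a 1 = a
  T_zero : ∀ a, T a 0 = 0

/-- A fuzzy binary relation `P` is asymmetric. -/
def FAsymm {X : Type*} (P : X → X → unitInterval) : Prop :=
  ∀ x y, 0 < P x y → P y x = 0

/-- A fuzzy binary relation `I` is symmetric. -/
def FSymm {X : Type*} (I : X → X → unitInterval) : Prop :=
  ∀ x y, I x y = I y x

/-- `(P, I)` is a weak decomposition of `R` with respect to the t-conorm `S`. -/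
def IsWeakDecomp {X : Type*} (S : Tconorm) (R P I : X → X → unitInterval) : Prop :=
  FAsymm P ∧ FSymm I ∧ (∀ x y, R x y = S.S (P x y) (I x y)) ∧
    ∀ x y, I x y = 1 → P x y = 0

/-- `(P, I)` is a strong decomposition of `R` with respect to `(T, S)`. -/
def IsStrongDecomp {X : Type*} (T : Tnorm) (S : Tconorm)
    (R P I : X → X → unitInterval) : Prop :=
  FAsymm P ∧ FSymm I ∧ (∀ x y, R x y = S.S (P x y) (I x y)) ∧
    ∀ x y, T.T (P x y) (I x y) = 0

/-- The triplet `(R, P, I)` is a fuzzy preference (FP1–FP6). -/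
def IsFuzzyPref {X : Type*} (R P I : X → X → unitInterval) : Prop :=
  (∀ x y, 0 < P x y → P y x = 0) ∧
  (∀ x y, I x y = I y x) ∧
  (∀ x y, P x y ≤ R x y) ∧
  (∀ x y, R y x < R x y ↔ 0 < P x y) ∧
  (∀ x y, P x y = 0 → R x y = I x y) ∧
  (∀ x y z w, I x y ≤ I z w → P x y ≤ P z w → R x y ≤ R z w)

/-!
Every weak decomposition `(P, I)` of `R` has `I x y = min (R x y) (R y x)`: `I ≤ R` in both
directions, and asymmetry of `P` makes one of the two inequalities an equality. So uniqueness
is only about `P`, which is pinned down by `S (P x y) (I x y) = R x y` exactly when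
`S(·, z)` is injective for `z < 1`; continuity of `S(·, z)` (intermediate value theorem)
guarantees that such a `P` exists. Conversely, if `S x z = S y z` with `x < y` and `z < 1`, the relations
placing `x`, resp. `y`, on one pair `(a, b)` together with the constant `I = z` are two weak
decompositions of the same relation.
-/

namespace Tconorm

variable (S : Tconorm)

theorem zero_S (a : unitInterval) : S.S 0 a = a :=
  (S.comm 0 a).trans (S.S_zero a)

theorem one_S (a : unitInterval) : S.S 1 a = 1 :=
  (S.comm 1 a).trans (S.S_one a)

theorem right_le_S (a b : unitInterval) : b ≤ S.S a b :=
  (S.zero_S b).symm.trans_le (S.mono _ _ _ _ unitInterval.nonneg' le_rfl)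

variable {S}

theorem exists_S_eq_of_le {i r : unitInterval} (hc : Continuous fun a => S.S a i)
    (h : i ≤ r) : ∃ p, S.S p i = r := by
  have hr : (r : ℝ) ∈ Set.Icc (S.S 0 i : ℝ) (S.S 1 i : ℝ) := by
    rw [S.zero_S, S.one_S]
    exact ⟨h, unitInterval.le_one'⟩
  obtain ⟨p, hp⟩ := intermediate_value_univ 0 1 (continuous_subtype_val.comp hc) hr
  exact ⟨p, Subtype.ext hp⟩

def IsStrict (S : Tconorm) : Prop :=
  ∀ x y z : unitInterval, x < y → z < 1 → S.S x z < S.S y z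

theorem IsStrict.left_eq_of_S_eq (hS : S.IsStrict) {p q i : unitInterval}
    (hp : i = 1 → p = 0) (hq : i = 1 → q = 0) (h : S.S p i = S.S q i) : p = q := by
  rcases eq_or_lt_of_le (unitInterval.le_one' : i ≤ 1) with hi | hi
  · rw [hp hi, hq hi]
  · rcases lt_trichotomy p q with hpq | hpq | hpq
    · exact absurd h (hS p q i hpq hi).ne
    · exact hpq
    · exact absurd h (hS q p i hpq hi).ne'

end Tconorm

section

variable {X : Type*}

theorem FAsymm.eq_zero_or {P : X → X → unitInterval} (hP : FAsymm P) (x y : X) :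
    P x y = 0 ∨ P y x = 0 := by
  rcases eq_or_lt_of_le (unitInterval.nonneg' : 0 ≤ P x y) with h | h
  · exact Or.inl h.symm
  · exact Or.inr (hP x y h)

theorem fasymm_single [DecidableEq X] {a b : X} (hab : a ≠ b) (w : unitInterval) :
    FAsymm (Pi.single a (Pi.single b w) : X → X → unitInterval) := by
  intro c d h
  obtain rfl : c = a := by
    by_contra hc
    simp [Pi.single_eq_of_ne hc] at h
  obtain rfl : d = b := by
    by_contra hd
    simp [Pi.single_eq_of_ne hd] at h
  simp [Pi.single_eq_of_ne hab.symm]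

theorem isWeakDecomp_const_right (S : Tconorm) {P : X → X → unitInterval} (hP : FAsymm P)
    {z : unitInterval} (hz : z < 1) : IsWeakDecomp S (fun c d => S.S (P c d) z) P (fun _ _ => z) :=
  ⟨hP, fun _ _ => rfl, fun _ _ => rfl, fun _ _ h => absurd h hz.ne⟩

namespace IsWeakDecomp

variable {S : Tconorm} {R P I P' I' : X → X → unitInterval}

theorem eq_min (h : IsWeakDecomp S R P I) (x y : X) :
    I x y = min (R x y) (R y x) := by
  obtain ⟨hP, hI, hR, -⟩ := h
  have hle : ∀ x y, I x y ≤ R x y := fun x y => hR x y ▸ S.right_le_S _ _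
  have heq : ∀ x y, P x y = 0 → I x y = R x y := fun x y h0 => by rw [hR, h0, S.zero_S]
  refine le_antisymm (le_min (hle x y) (hI x y ▸ hle y x)) ?_
  rcases hP.eq_zero_or x y with h0 | h0
  · exact heq x y h0 ▸ min_le_left _ _
  · exact hI x y ▸ heq y x h0 ▸ min_le_right _ _

theorem eq_of_isStrict (hS : S.IsStrict) (h : IsWeakDecomp S R P I)
    (h' : IsWeakDecomp S R P' I') : P' = P ∧ I' = I := by
  obtain rfl : I' = I := funext fun x => funext fun y => by rw [h.eq_min, h'.eq_min]
  refine ⟨funext fun x => funext fun y => ?_, rfl⟩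
  exact hS.left_eq_of_S_eq (h'.2.2.2 x y) (h.2.2.2 x y)
    ((h'.2.2.1 x y).symm.trans (h.2.2.1 x y))

end IsWeakDecomp

theorem exists_isWeakDecomp {S : Tconorm} (hc : ∀ b, Continuous fun a => S.S a b)
    (R : X → X → unitInterval) : ∃ P I, IsWeakDecomp S R P I := by
  -- Taking `p = 0` whenever `R x y ≤ R y x` makes `P` asymmetric even when `S` is not strict.
  have hP : ∀ x y, ∃ p,
      S.S p (min (R x y) (R y x)) = R x y ∧ (R x y ≤ R y x → p = 0) := by
    intro x y
    by_cases hxy : R x y ≤ R y x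
    · exact ⟨0, by rw [S.zero_S, min_eq_left hxy], fun _ => rfl⟩
    · obtain ⟨p, hp⟩ := Tconorm.exists_S_eq_of_le (hc _) (min_le_left (R x y) (R y x))
      exact ⟨p, hp, fun h => absurd h hxy⟩
  choose P hPR hP0 using hP
  refine ⟨P, fun x y => min (R x y) (R y x), fun x y hxy => hP0 y x ?_,
    fun x y => min_comm _ _, fun x y => (hPR x y).symm, fun x y h => hP0 x y ?_⟩
  · by_contra hle
    exact hxy.ne' (hP0 x y (not_le.mp hle).le)
  · exact unitInterval.le_one'.trans (h.symm.trans_le (min_le_right _ _))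

theorem exists_isWeakDecomp_ne_of_S_eq (S : Tconorm) {a b : X} (hab : a ≠ b)
    {x y z : unitInterval} (hxy : x ≠ y) (hz : z < 1) (hS : S.S x z = S.S y z) :
    ∃ R P P' I : X → X → unitInterval,
      IsWeakDecomp S R P I ∧ IsWeakDecomp S R P' I ∧ P ≠ P' := by
  classical
  refine ⟨_, _, Pi.single a (Pi.single b y), _,
    isWeakDecomp_const_right S (fasymm_single hab x) hz, ?_, ?_⟩
  · convert isWeakDecomp_const_right S (fasymm_single hab y) hz using 1
    funext c d
    simp only [Pi.single_apply, ite_apply, Pi.zero_apply]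
    split_ifs <;> simp [hS]
  · intro h
    exact hxy (by simpa using congrFun (congrFun h a) b)

end

/-- For `S` continuous in the first coordinate, every fuzzy binary relation has a unique
weak decomposition iff `S` is strictly increasing in the first coordinate. -/
theorem weak_decomp_unique_iff_strict {X : Type*} (hX : ∃ x y : X, x ≠ y)
    (S : Tconorm) (hc : ∀ b, Continuous fun a => S.S a b) :
    (∀ R : X → X → unitInterval, ∃ P I : X → X → unitInterval,
        IsWeakDecomp S R P I ∧
        ∀ P' I' : X → X → unitInterval, IsWeakDecomp S R P' I' → P' = P ∧ I' = I) ↔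
    (∀ x y z : unitInterval, x < y → z < 1 → S.S x z < S.S y z) := by
  constructor
  · intro huniq x y z hxy hz
    by_contra! hle
    obtain ⟨a, b, hab⟩ := hX
    obtain ⟨R, P, P', I, h, h', hne⟩ := exists_isWeakDecomp_ne_of_S_eq S hab hxy.ne hz
      (le_antisymm (S.mono _ _ _ _ hxy.le le_rfl) hle)
    obtain ⟨_, _, -, hu⟩ := huniq R
    exact hne ((hu _ _ h).1.trans (hu _ _ h').1.symm)
  · intro hS R
    obtain ⟨P, I, h⟩ := exists_isWeakDecomp hc R
    exact ⟨P, I, h, fun P' I' h' => h.eq_of_isStrict hS h'⟩
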